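/- Hilbert–Schmidt symmetrisation estimate (estimate (6.9)). Let H be a complex Hilbert space with a Hilbert (orthonormal) basis (e_i)_{i∈I}, and let L and M be bounded nonnegative self-adjoint operators on H such that Σ_i ‖(L M)(e_i)‖² < ∞. Let √L denote the positive square root of L (continuous functional calculus). Then Σ_i ‖(√L M √L)(e_i)‖² ≤ Σ_i ‖(L M)(e_i)‖²; that is, the Hilbert–Schmidt norm of L^{1/2} M L^{1/2} is at most the Hilbert–Schmidt norm of L M. -/

import Mathlib

/-!
Write `S = √L` and `K = L M`. Formally `‖S M S‖²_HS = tr ((S M S)²) = tr (L M L M) = tr (K²)`,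
and `|tr (P²)| ≤ ‖P‖_HS ‖P*‖_HS = ‖P‖²_HS`. Cyclicity of the trace needs Hilbert–Schmidt factors,
which `S` need not be, so `S` is replaced by `S_ε = L (L + ε)^(-1/2)`: now
`(S_ε M S_ε)² = ((L + ε)^(-1/2) K) (C K S_ε)` with `C = L (L + ε)⁻¹` of norm at most `1`, both
factors are Hilbert–Schmidt, and the same computation gives
`‖S_ε M S_ε‖²_HS ≤ ‖C K‖²_HS ≤ ‖K‖²_HS`. Finally `S_ε → S` in norm as `ε → 0⁺`, and the
Hilbert–Schmidt norm is lower semicontinuous for the norm topology.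
-/

open scoped ENNReal InnerProductSpace
open ContinuousLinearMap Filter Topology

theorem abs_mul_inv_sqrt_add_sub_sqrt_le {x ε : ℝ} (hx : 0 ≤ x) (hε : 0 < ε) :
    |x * (√(x + ε))⁻¹ - √x| ≤ √ε := by
  have ht : 0 < √(x + ε) := Real.sqrt_pos.2 (by linarith)
  have hst : √x ≤ √(x + ε) := Real.sqrt_le_sqrt (by linarith)
  have htsu : √(x + ε) ≤ √x + √ε := by
    rw [Real.sqrt_le_left (by positivity)]
    nlinarith [Real.sq_sqrt hx, Real.sq_sqrt hε.le, Real.sqrt_nonneg x, Real.sqrt_nonneg ε]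
  have hx' : x = √x * √x := (Real.mul_self_sqrt hx).symm
  rw [abs_le, ← div_eq_mul_inv, le_sub_iff_add_le, sub_le_iff_le_add, le_div_iff₀ ht,
    div_le_iff₀ ht]
  constructor <;> nlinarith [Real.sqrt_nonneg x, Real.sqrt_nonneg ε]

section CFC

variable {A : Type*} [CStarAlgebra A] {a : A} {ε : ℝ}

noncomputable def invSqrtAdd (ε : ℝ) (a : A) : A :=
  cfc (fun x : ℝ => (√(x + ε))⁻¹) a

theorem isSelfAdjoint_invSqrtAdd : IsSelfAdjoint (invSqrtAdd ε a) :=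
  cfc_predicate _ a

theorem commute_invSqrtAdd (ha : IsSelfAdjoint a) : Commute a (invSqrtAdd ε a) := by
  nth_rewrite 1 [← cfc_id' ℝ a]; exact cfc_commute_cfc _ _ a

variable [PartialOrder A] [StarOrderedRing A]

theorem continuousOn_inv_sqrt_add (ha : 0 ≤ a) (hε : 0 < ε) :
    ContinuousOn (fun x : ℝ => (√(x + ε))⁻¹) (spectrum ℝ a) :=
  ContinuousOn.inv₀ (by fun_prop) fun x hx =>
    (Real.sqrt_pos.2 (by linarith [spectrum_nonneg_of_nonneg ha hx])).ne'

theorem norm_mul_invSqrtAdd_mul_self_le_one (ha : 0 ≤ a) (hε : 0 < ε) :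
    ‖a * (invSqrtAdd ε a * invSqrtAdd ε a)‖ ≤ 1 := by
  have hc := continuousOn_inv_sqrt_add ha hε
  have h : a * (invSqrtAdd ε a * invSqrtAdd ε a) =
      cfc (fun x => x * ((√(x + ε))⁻¹ * (√(x + ε))⁻¹)) a := by
    rw [cfc_mul (fun x => x) _ a, cfc_mul _ _ a hc hc, cfc_id' ℝ a, invSqrtAdd]
  rw [h]
  refine norm_cfc_le zero_le_one fun x hx => ?_
  have hx := spectrum_nonneg_of_nonneg ha hx
  rw [← mul_inv, Real.mul_self_sqrt (by linarith), Real.norm_of_nonneg (by positivity),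
    ← div_eq_mul_inv, div_le_one (by linarith)]
  linarith

theorem norm_mul_invSqrtAdd_sub_sqrt_le (ha : 0 ≤ a) (hε : 0 < ε) :
    ‖a * invSqrtAdd ε a - cfc Real.sqrt a‖ ≤ √ε := by
  have h : a * invSqrtAdd ε a - cfc Real.sqrt a = cfc (fun x => x * (√(x + ε))⁻¹ - √x) a := by
    rw [cfc_sub (fun x => x * (√(x + ε))⁻¹) Real.sqrt a
        (continuousOn_id.mul (continuousOn_inv_sqrt_add ha hε)),
      cfc_mul (fun x => x) _ a continuousOn_id (continuousOn_inv_sqrt_add ha hε), cfc_id' ℝ a,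
      invSqrtAdd]
  rw [h]
  exact norm_cfc_le (Real.sqrt_nonneg ε) fun x hx =>
    abs_mul_inv_sqrt_add_sub_sqrt_le (spectrum_nonneg_of_nonneg ha hx) hε

theorem tendsto_mul_invSqrtAdd (ha : 0 ≤ a) :
    Tendsto (fun ε => a * invSqrtAdd ε a) (𝓝[>] 0) (𝓝 (cfc Real.sqrt a)) := by
  have hsqrt : Tendsto (fun ε : ℝ => √ε) (𝓝[>] 0) (𝓝 0) := by
    simpa using (Real.continuous_sqrt.tendsto 0).mono_left nhdsWithin_le_nhds
  refine tendsto_iff_norm_sub_tendsto_zero.2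
    (squeeze_zero' (Eventually.of_forall fun _ => norm_nonneg _) ?_ hsqrt)
  filter_upwards [self_mem_nhdsWithin] with ε hε using norm_mul_invSqrtAdd_sub_sqrt_le ha hε

end CFC

section HilbertSchmidt

variable {𝕜 E ι : Type*} [RCLike 𝕜] [NormedAddCommGroup E] [InnerProductSpace 𝕜 E]
  (b : HilbertBasis ι 𝕜 E)

theorem HilbertBasis.hasSum_norm_sq (x : E) : HasSum (fun i => ‖⟪b i, x⟫_𝕜‖ ^ 2) (‖x‖ ^ 2) := by
  simpa [b.repr_apply_apply] using lp.hasSum_norm (p := 2) (by norm_num) (b.repr x)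

theorem HilbertBasis.nnnorm_sq_eq_tsum (x : E) :
    (‖x‖₊ : ℝ≥0∞) ^ 2 = ∑' i, (‖⟪b i, x⟫_𝕜‖₊ : ℝ≥0∞) ^ 2 := by
  have h : HasSum (fun i => ‖⟪b i, x⟫_𝕜‖₊ ^ 2) (‖x‖₊ ^ 2) := by
    rw [← NNReal.hasSum_coe]; push_cast; exact b.hasSum_norm_sq x
  exact_mod_cast (ENNReal.hasSum_coe.2 h).tsum_eq.symm

noncomputable def hsNormSq (A : E →L[𝕜] E) : ℝ≥0∞ :=
  ∑' i, (‖A (b i)‖₊ : ℝ≥0∞) ^ 2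

theorem hsNormSq_mul_le_left (A C : E →L[𝕜] E) :
    hsNormSq b (A * C) ≤ (‖A‖₊ : ℝ≥0∞) ^ 2 * hsNormSq b C := by
  rw [hsNormSq, hsNormSq, ← ENNReal.tsum_mul_left]
  refine ENNReal.tsum_le_tsum fun i => ?_
  rw [← mul_pow]
  gcongr
  exact_mod_cast A.le_opNNNorm (C (b i))

theorem hsNormSq_mul_lt_top_left {A C : E →L[𝕜] E} (hC : hsNormSq b C < ⊤) :
    hsNormSq b (A * C) < ⊤ :=
  (hsNormSq_mul_le_left b A C).trans_lt (ENNReal.mul_lt_top (by simp) hC)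

theorem hsNormSq_mul_le_of_norm_le_one {A C : E →L[𝕜] E} (hA : ‖A‖ ≤ 1) :
    hsNormSq b (A * C) ≤ hsNormSq b C := by
  have hA' : (‖A‖₊ : ℝ≥0∞) ^ 2 ≤ 1 := pow_le_one₀ (by positivity) (by exact_mod_cast hA)
  simpa using (hsNormSq_mul_le_left b A C).trans (mul_le_mul_left hA' _)

theorem toReal_hsNormSq (A : E →L[𝕜] E) : (hsNormSq b A).toReal = ∑' i, ‖A (b i)‖ ^ 2 := by
  rw [hsNormSq, ENNReal.tsum_toReal_eq (fun i => by simp)]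
  simp

theorem summable_norm_sq_of_hsNormSq_lt_top {A : E →L[𝕜] E} (hA : hsNormSq b A < ⊤) :
    Summable fun i => ‖A (b i)‖ ^ 2 := by
  simpa using ENNReal.summable_toReal hA.ne

theorem summable_norm_inner_sq_of_hsNormSq_lt_top {A : E →L[𝕜] E} (hA : hsNormSq b A < ⊤) :
    Summable fun p : ι × ι => ‖⟪b p.2, A (b p.1)⟫_𝕜‖ ^ 2 := by
  refine (summable_prod_of_nonneg fun _ => by positivity).2
    ⟨fun i => (b.hasSum_norm_sq (A (b i))).summable, ?_⟩
  exact (summable_norm_sq_of_hsNormSq_lt_top b hA).congr fun i =>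
    (b.hasSum_norm_sq (A (b i))).tsum_eq.symm

theorem lowerSemicontinuous_hsNormSq : LowerSemicontinuous (hsNormSq b) :=
  lowerSemicontinuous_tsum fun i => Continuous.lowerSemicontinuous (by fun_prop)

variable [CompleteSpace E]

theorem hsNormSq_star (A : E →L[𝕜] E) : hsNormSq b (star A) = hsNormSq b A := by
  simp only [hsNormSq, star_eq_adjoint, b.nnnorm_sq_eq_tsum, adjoint_inner_right,
    ← inner_conj_symm (b _) (A _), RCLike.nnnorm_conj]
  exact ENNReal.tsum_comm

theorem hsNormSq_mul_le_right (A C : E →L[𝕜] E) :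
    hsNormSq b (A * C) ≤ (‖C‖₊ : ℝ≥0∞) ^ 2 * hsNormSq b A := by
  have h := hsNormSq_mul_le_left b (star C) (star A)
  rwa [← star_mul, hsNormSq_star, hsNormSq_star, star_eq_adjoint C,
    LinearIsometryEquiv.nnnorm_map] at h

theorem hsNormSq_mul_lt_top_right {A C : E →L[𝕜] E} (hA : hsNormSq b A < ⊤) :
    hsNormSq b (A * C) < ⊤ :=
  (hsNormSq_mul_le_right b A C).trans_lt (ENNReal.mul_lt_top (by simp) hA)

theorem tsum_inner_mul_apply_comm {X Y : E →L[𝕜] E} (hX : hsNormSq b X < ⊤)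
    (hY : hsNormSq b Y < ⊤) :
    ∑' i, ⟪(X * Y) (b i), b i⟫_𝕜 = ∑' i, ⟪(Y * X) (b i), b i⟫_𝕜 := by
  have hX' : hsNormSq b (adjoint X) < ⊤ := by rwa [← star_eq_adjoint, hsNormSq_star]
  set F : ι → ι → 𝕜 := fun i j => ⟪Y (b i), b j⟫_𝕜 * ⟪b j, adjoint X (b i)⟫_𝕜
  have hF : Summable (Function.uncurry F) := by
    refine .of_norm <| .of_nonneg_of_le (fun _ => norm_nonneg _) (fun p => ?_)
      (((summable_norm_inner_sq_of_hsNormSq_lt_top b hY).add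
        (summable_norm_inner_sq_of_hsNormSq_lt_top b hX')).div_const 2)
    simp only [Function.uncurry, F, norm_mul, norm_inner_symm (Y _)]
    linarith [two_mul_le_add_sq ‖⟪b p.2, Y (b p.1)⟫_𝕜‖ ‖⟪b p.2, adjoint X (b p.1)⟫_𝕜‖]
  calc ∑' i, ⟪(X * Y) (b i), b i⟫_𝕜
      = ∑' i, ∑' j, F i j := tsum_congr fun i => by
        rw [b.tsum_inner_mul_inner, adjoint_inner_right]
        rfl
    _ = ∑' j, ∑' i, F i j := hF.tsum_comm.symm
    _ = ∑' j, ⟪(Y * X) (b j), b j⟫_𝕜 := tsum_congr fun j => by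
        rw [mul_apply_eq_comp, ← adjoint_inner_right, ← b.tsum_inner_mul_inner]
        exact tsum_congr fun i => by simp only [F, adjoint_inner_right]; ring

theorem ofReal_toReal_hsNormSq (A : E →L[𝕜] E) :
    ((hsNormSq b A).toReal : 𝕜) = ∑' i, ⟪(adjoint A * A) (b i), b i⟫_𝕜 := by
  simp only [toReal_hsNormSq, RCLike.ofReal_tsum, mul_apply_eq_comp, adjoint_inner_left,
    inner_self_eq_norm_sq_to_K, RCLike.ofReal_pow]

theorem norm_tsum_inner_mul_self_apply_le {P : E →L[𝕜] E} (hP : hsNormSq b P < ⊤) :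
    ‖∑' i, ⟪(P * P) (b i), b i⟫_𝕜‖ ≤ (hsNormSq b P).toReal := by
  have hP' : hsNormSq b (adjoint P) < ⊤ := by rwa [← star_eq_adjoint, hsNormSq_star]
  have h₁ := (summable_norm_sq_of_hsNormSq_lt_top b hP).div_const 2
  have h₂ := (summable_norm_sq_of_hsNormSq_lt_top b hP').div_const 2
  have hle : ∀ i,
      ‖⟪(P * P) (b i), b i⟫_𝕜‖ ≤ ‖P (b i)‖ ^ 2 / 2 + ‖adjoint P (b i)‖ ^ 2 / 2 := by
    intro i
    rw [mul_apply_eq_comp, ← adjoint_inner_right]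
    linarith [norm_inner_le_norm (𝕜 := 𝕜) (P (b i)) (adjoint P (b i)),
      two_mul_le_add_sq ‖P (b i)‖ ‖adjoint P (b i)‖]
  have hsum_norm := (h₁.add h₂).of_nonneg_of_le (fun _ => norm_nonneg _) hle
  calc ‖∑' i, ⟪(P * P) (b i), b i⟫_𝕜‖
      ≤ ∑' i, ‖⟪(P * P) (b i), b i⟫_𝕜‖ := norm_tsum_le_tsum_norm hsum_norm
    _ ≤ ∑' i, (‖P (b i)‖ ^ 2 / 2 + ‖adjoint P (b i)‖ ^ 2 / 2) :=
        hsum_norm.tsum_le_tsum hle (h₁.add h₂)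
    _ = (hsNormSq b P).toReal := by
        rw [h₁.tsum_add h₂, tsum_div_const, tsum_div_const, ← toReal_hsNormSq,
          ← toReal_hsNormSq, ← star_eq_adjoint, hsNormSq_star]
        ring

theorem hsNormSq_mul_mul_mul_le {A B M : E →L[𝕜] E} (hA : IsSelfAdjoint A)
    (hB : IsSelfAdjoint B) (hM : IsSelfAdjoint M) (hAB : Commute A B)
    (hABB : ‖A * (B * B)‖ ≤ 1) (hAM : hsNormSq b (A * M) < ⊤) :
    hsNormSq b (A * B * M * (A * B)) ≤ hsNormSq b (A * M) := by
  set G := A * B * M * (A * B)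
  set K := A * M
  set C := A * (B * B)
  have hG : G = B * K * (A * B) := by simp only [G, K, mul_assoc, hAB.eq]
  have hGG : G * G = (B * K) * (C * K * (A * B)) := by
    simp only [G, K, C, mul_assoc, hAB.eq, hAB.left_comm]
  have hUW : (C * K * (A * B)) * (B * K) = (C * K) * (C * K) := by simp only [C, mul_assoc]
  have hG_fin : hsNormSq b G < ⊤ :=
    hG ▸ hsNormSq_mul_lt_top_right b (hsNormSq_mul_lt_top_left b hAM)
  have hGsa : adjoint G = G :=
    (star_eq_adjoint G).symm.trans (hM.conjugate_self ((hA.commute_iff hB).1 hAB)).star_eq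
  have htrace : ((hsNormSq b G).toReal : 𝕜) = ∑' i, ⟪((C * K) * (C * K)) (b i), b i⟫_𝕜 := by
    rw [ofReal_toReal_hsNormSq, hGsa, hGG, ← hUW,
      tsum_inner_mul_apply_comm b (hsNormSq_mul_lt_top_left b hAM)
        (hsNormSq_mul_lt_top_right b (hsNormSq_mul_lt_top_left b hAM))]
  refine (ENNReal.toReal_le_toReal hG_fin.ne hAM.ne).1 ?_
  calc (hsNormSq b G).toReal = ‖((hsNormSq b G).toReal : 𝕜)‖ := by
        rw [RCLike.norm_ofReal, abs_of_nonneg ENNReal.toReal_nonneg]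
    _ ≤ (hsNormSq b (C * K)).toReal := by
        rw [htrace]; exact norm_tsum_inner_mul_self_apply_le b (hsNormSq_mul_lt_top_left b hAM)
    _ ≤ (hsNormSq b K).toReal :=
        ENNReal.toReal_mono hAM.ne (hsNormSq_mul_le_of_norm_le_one b hABB)

end HilbertSchmidt

/-- Hilbert–Schmidt symmetrisation estimate: for bounded nonnegative
self-adjoint operators `L, M` on a complex Hilbert space with Hilbert basis `(e_i)`, if
`Σ_i ‖(L M) e_i‖² < ∞` then `Σ_i ‖(√L M √L) e_i‖² ≤ Σ_i ‖(L M) e_i‖²` (sums in `ℝ≥0∞`). -/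
theorem hilbert_schmidt_symmetrisation
    {H : Type*} [NormedAddCommGroup H] [InnerProductSpace ℂ H] [CompleteSpace H]
    {I : Type*} (b : HilbertBasis I ℂ H)
    (L M : H →L[ℂ] H) (hL : L.IsPositive) (hM : M.IsPositive)
    (hfin : ∑' i : I, (‖(L * M) (b i)‖₊ : ℝ≥0∞) ^ 2 < ⊤) :
    ∑' i : I, (‖(cfc Real.sqrt L * M * cfc Real.sqrt L) (b i)‖₊ : ℝ≥0∞) ^ 2 ≤
      ∑' i : I, (‖(L * M) (b i)‖₊ : ℝ≥0∞) ^ 2 := by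
  have hL₀ : 0 ≤ L := (nonneg_iff_isPositive L).2 hL
  have hlim : Tendsto (fun ε => L * invSqrtAdd ε L * M * (L * invSqrtAdd ε L)) (𝓝[>] 0)
      (𝓝 (cfc Real.sqrt L * M * cfc Real.sqrt L)) :=
    ((tendsto_mul_invSqrtAdd hL₀).mul_const M).mul (tendsto_mul_invSqrtAdd hL₀)
  have hbound : ∀ᶠ ε in 𝓝[>] (0 : ℝ),
      hsNormSq b (L * invSqrtAdd ε L * M * (L * invSqrtAdd ε L)) ≤ hsNormSq b (L * M) := by
    filter_upwards [self_mem_nhdsWithin] with ε hε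
    exact hsNormSq_mul_mul_mul_le b hL.isSelfAdjoint isSelfAdjoint_invSqrtAdd hM.isSelfAdjoint
      (commute_invSqrtAdd hL.isSelfAdjoint) (norm_mul_invSqrtAdd_mul_self_le_one hL₀ hε) hfin
  exact ((lowerSemicontinuous_hsNormSq b).isClosed_preimage _).mem_of_tendsto hlim hbound
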